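/- Special case: if g(x, qx) = 0 and g(x,x) ≠ 0, then with R as in the curvature formula, the sectional curvature μ(x, qx) = R(x,qx,x,qx)/(g(x,x)g(qx,qx) - g(x,qx)²) equals -τ/6. -/

import Mathlib

/-! The cyclic permutation `q` is an isometry of the circulant form `g` with `q³ = 1`. Hence
`g(qx, qx) = g(x, x)`, and `g(x, q²x) = g(qx, x) = 0`, so `f(x, x) = 0` and
`f(x, qx) = f(qx, x) = g(x, x)`. The numerator then collapses to `-(τ/6) g(x, x)²`,
while the denominator is `g(x, x)²`. -/

open Matrix

noncomputable def gmat (A B : ℝ) : Matrix (Fin 3) (Fin 3) ℝ := Matrix.of fun i j => if i = j then A else B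
noncomputable def qmat : Matrix (Fin 3) (Fin 3) ℝ := !![0,1,0; 0,0,1; 1,0,0]
noncomputable def fmat (A B : ℝ) : Matrix (Fin 3) (Fin 3) ℝ := Matrix.of fun i j => if i = j then 2*B else A + B
noncomputable def Jmat : Matrix (Fin 3) (Fin 3) ℝ := Matrix.of fun _ _ => 1
noncomputable def Phi : Matrix (Fin 3) (Fin 3) ℝ := Jmat - 1
noncomputable def Smat : Matrix (Fin 3) (Fin 3) ℝ := Jmat - 2 • (1 : Matrix (Fin 3) (Fin 3) ℝ)
noncomputable def gb (A B : ℝ) (u v : Fin 3 → ℝ) : ℝ := u ⬝ᵥ (gmat A B).mulVec v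
noncomputable def fb (A B : ℝ) (u v : Fin 3 → ℝ) : ℝ := gb A B (qmat.mulVec u) v + gb A B u (qmat.mulVec v)
noncomputable def Rt (A B τ : ℝ) (x y z u : Fin 3 → ℝ) : ℝ :=
  (τ/6) * (2 * gb A B x u * gb A B y z - 2 * gb A B x z * gb A B y u
    + fb A B x u * fb A B y z - fb A B x z * fb A B y u)

section

variable (A B : ℝ)

theorem gmat_transpose : (gmat A B)ᵀ = gmat A B := by
  ext i j
  simp only [gmat, transpose_apply, of_apply, eq_comm]

theorem qmat_transpose_mul_gmat_mul_qmat : qmatᵀ * gmat A B * qmat = gmat A B := by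
  ext i j
  fin_cases i <;> fin_cases j <;> simp [qmat, gmat, mul_apply, Fin.sum_univ_three]

theorem qmat_mul_qmat_mul_qmat : qmat * qmat * qmat = 1 := by
  ext i j
  fin_cases i <;> fin_cases j <;> simp [qmat, mul_apply, Fin.sum_univ_three]

theorem gb_comm (u v : Fin 3 → ℝ) : gb A B u v = gb A B v u := by
  rw [gb, gb, dotProduct_mulVec, dotProduct_comm, ← mulVec_transpose, gmat_transpose]

theorem gb_qmat_mulVec_qmat_mulVec (u v : Fin 3 → ℝ) :
    gb A B (qmat *ᵥ u) (qmat *ᵥ v) = gb A B u v := by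
  rw [gb, gb]
  conv_lhs => rw [dotProduct_comm, dotProduct_mulVec, ← mulVec_transpose, dotProduct_comm,
    mulVec_mulVec, mulVec_mulVec, qmat_transpose_mul_gmat_mul_qmat]

theorem qmat_mulVec_qmat_mulVec_qmat_mulVec (u : Fin 3 → ℝ) :
    qmat *ᵥ (qmat *ᵥ (qmat *ᵥ u)) = u := by
  rw [mulVec_mulVec, mulVec_mulVec, qmat_mul_qmat_mul_qmat, one_mulVec]

theorem fb_self (x : Fin 3 → ℝ) : fb A B x x = 2 * gb A B x (qmat *ᵥ x) := by
  rw [fb, gb_comm]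
  ring

theorem fb_qmat_mulVec_right (x : Fin 3 → ℝ) :
    fb A B x (qmat *ᵥ x) = gb A B x x + gb A B x (qmat *ᵥ x) := by
  rw [fb, gb_qmat_mulVec_qmat_mulVec, add_comm, gb_comm A B x,
    ← gb_qmat_mulVec_qmat_mulVec A B (qmat *ᵥ (qmat *ᵥ x)), qmat_mulVec_qmat_mulVec_qmat_mulVec,
    add_comm]

theorem fb_qmat_mulVec_left (x : Fin 3 → ℝ) :
    fb A B (qmat *ᵥ x) x = gb A B x x + gb A B x (qmat *ᵥ x) := by
  rw [← fb_qmat_mulVec_right, fb, fb, add_comm, gb_comm A B x, gb_comm A B (qmat *ᵥ x)]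

theorem Rt_qmat_mulVec_of_gb_eq_zero (τ : ℝ) (x : Fin 3 → ℝ) (h0 : gb A B x (qmat *ᵥ x) = 0) :
    Rt A B τ x (qmat *ᵥ x) x (qmat *ᵥ x) = -(τ / 6) * gb A B x x ^ 2 := by
  rw [Rt, fb_self, fb_qmat_mulVec_right, fb_qmat_mulVec_left, gb_comm A B (qmat *ᵥ x) x, h0,
    gb_qmat_mulVec_qmat_mulVec]
  ring

end

theorem stmt17_general (A B τ : ℝ) (x : Fin 3 → ℝ)
    (h0 : gb A B x (qmat.mulVec x) = 0) (hx : 0 < gb A B x x) :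
    Rt A B τ x (qmat.mulVec x) x (qmat.mulVec x) /
      (gb A B x x * gb A B (qmat.mulVec x) (qmat.mulVec x) - (gb A B x (qmat.mulVec x))^2)
    = -(τ/6) := by
  rw [Rt_qmat_mulVec_of_gb_eq_zero A B τ x h0, gb_qmat_mulVec_qmat_mulVec, h0]
  field_simp
  ring

theorem stmt17 (A B τ : ℝ) (hB : 0 < B) (hAB : B < A) (x : Fin 3 → ℝ)
    (h0 : gb A B x (qmat.mulVec x) = 0) (hx : 0 < gb A B x x) :
    Rt A B τ x (qmat.mulVec x) x (qmat.mulVec x) /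
      (gb A B x x * gb A B (qmat.mulVec x) (qmat.mulVec x) - (gb A B x (qmat.mulVec x))^2)
    = -(τ/6) :=
  stmt17_general A B τ x h0 hx
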